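/- If F : ℂ → ℂ is six times differentiable and solves the 6th order ODE 10F⁽⁶⁾(F'')³ - 80(F'')²F⁽³⁾F⁽⁵⁾ - 51(F'')²(F⁽⁴⁾)² + 336F''(F''')²F⁽⁴⁾ - 224(F''')⁴ = 0 on an open set, and a,b,c,d ∈ ℂ with ad-bc=1 and cx+d ≠ 0, then F̃(x) = (cx+d)·F((ax+b)/(cx+d)) also solves the same ODE. -/

import Mathlib

/-!
Write `G ∣ₖ γ` for `z ↦ (c z + d)^(-k) G(γ z)`, `γ z = (a z + b)/(c z + d)`. Since
`γ' = (c z + d)^(-2)`, differentiation acts by `(G ∣ₖ γ)' = -k c (G ∣ₖ₊₁ γ) + G' ∣ₖ₊₂ γ`, and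
iterating gives the Bol-type formula
`(G ∣ₖ γ)^(m) = ∑ⱼ C(m, j) (k + j)(k + j + 1)⋯(k + m - 1) (-c)^(m - j) (G^(j) ∣ₖ₊ₘ₊ⱼ γ)`.
For `F̃ = F ∣₋₁ γ` these rising factorials vanish when `j < 2 ≤ m`, so `F̃^(m)` only involves
`F'', …, F^(m)`, and substituting shows that the left-hand side of the equation for `F̃` at `x` is
`(c x + d)^(-20)` times the left-hand side for `F` at `γ x`.
-/

open Finset Polynomial

theorem ContDiffOn.hasDerivAt_iteratedDeriv {𝕜 E : Type*} [NontriviallyNormedField 𝕜]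
    [NormedAddCommGroup E] [NormedSpace 𝕜 E] {G : 𝕜 → E} {U : Set 𝕜} {n : WithTop ℕ∞} {m : ℕ}
    (hG : ContDiffOn 𝕜 n G U) (hU : IsOpen U) (hm : (m : WithTop ℕ∞) < n) {y : 𝕜} (hy : y ∈ U) :
    HasDerivAt (iteratedDeriv m G) (iteratedDeriv (m + 1) G y) y := by
  have hdiff : DifferentiableOn 𝕜 (iteratedDeriv m G) U :=
    (hG.differentiableOn_iteratedDerivWithin hm hU.uniqueDiffOn).congr
      fun z hz => (iteratedDerivWithin_of_isOpen hU hz).symm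
  rw [iteratedDeriv_succ]
  exact ((hdiff y hy).differentiableAt (hU.mem_nhds hy)).hasDerivAt

noncomputable def slashCoeff (k : ℤ) (m j : ℕ) : ℂ :=
  m.choose j * (ascPochhammer ℂ (m - j)).eval ((k : ℂ) + j)

theorem slashCoeff_succ_zero (k : ℤ) (m : ℕ) :
    slashCoeff k (m + 1) 0 = (k + m) * slashCoeff k m 0 := by
  simp only [slashCoeff, Nat.choose_zero_right, Nat.sub_zero, ascPochhammer_succ_eval]
  push_cast
  ring

theorem slashCoeff_succ_succ (k : ℤ) (m j : ℕ) :
    slashCoeff k (m + 1) (j + 1) = (k + m + j + 1) * slashCoeff k m (j + 1) + slashCoeff k m j := by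
  rcases lt_trichotomy j m with hj | rfl | hj
  · obtain ⟨n, hn⟩ : ∃ n, m - j = n + 1 := ⟨m - j - 1, by omega⟩
    have hpascal : ((m + 1).choose (j + 1) : ℂ) = m.choose j + m.choose (j + 1) := by
      exact_mod_cast Nat.choose_succ_succ' m j
    have habsorb : (m.choose (j + 1) : ℂ) * (j + 1) = m.choose j * (n + 1) := by
      exact_mod_cast hn ▸ Nat.choose_succ_right_eq m j
    have hA : (ascPochhammer ℂ (n + 1)).eval ((k : ℂ) + j) =
        ((k : ℂ) + j) * (ascPochhammer ℂ n).eval ((k : ℂ) + ↑(j + 1)) := by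
      rw [ascPochhammer_succ_left, eval_mul, eval_X, eval_comp]
      simp only [eval_add, eval_X, eval_one]
      push_cast
      ring_nf
    have hm : (m : ℂ) = j + n + 1 := by exact_mod_cast (by omega : m = j + n + 1)
    simp only [slashCoeff, show m + 1 - (j + 1) = n + 1 by omega, show m - (j + 1) = n by omega,
      hn, hA, ascPochhammer_succ_eval, hpascal]
    push_cast
    rw [hm]
    linear_combination -(ascPochhammer ℂ n).eval ((k : ℂ) + (j + 1)) * habsorb
  · simp [slashCoeff, Nat.choose_succ_self]
  · simp [slashCoeff, Nat.choose_eq_zero_of_lt hj, Nat.choose_eq_zero_of_lt (Nat.lt_succ_of_lt hj),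
      Nat.choose_eq_zero_of_lt (Nat.succ_lt_succ hj)]

theorem sum_slashCoeff_succ (k : ℤ) (c : ℂ) (m : ℕ) (u : ℕ → ℂ) :
    ∑ j ∈ range (m + 2), slashCoeff k (m + 1) j * (-c) ^ (m + 1 - j) * u j =
      ∑ j ∈ range (m + 1),
        slashCoeff k m j * (-c) ^ (m - j) * (-(k + m + j) * c * u j + u (j + 1)) := by
  set X : ℕ → ℂ := fun j => (k + m + j) * slashCoeff k m j * (-c) ^ (m + 1 - j) * u j
  have hX_top : X (m + 1) = 0 := by simp [X, slashCoeff, Nat.choose_succ_self]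
  have hX : ∑ j ∈ range (m + 1), X j = ∑ j ∈ range (m + 1), X (j + 1) + X 0 := by
    rw [← sum_range_succ' X, sum_range_succ X (m + 1), hX_top, add_zero]
  calc ∑ j ∈ range (m + 2), slashCoeff k (m + 1) j * (-c) ^ (m + 1 - j) * u j
      = ∑ j ∈ range (m + 1), (X (j + 1) + slashCoeff k m j * (-c) ^ (m - j) * u (j + 1)) + X 0 := by
        rw [sum_range_succ']
        simp only [slashCoeff_succ_succ, slashCoeff_succ_zero, Nat.add_sub_add_right, X]
        push_cast
        congr 1
        · exact sum_congr rfl fun j _ => by ring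
        · ring
    _ = ∑ j ∈ range (m + 1),
          slashCoeff k m j * (-c) ^ (m - j) * (-(k + m + j) * c * u j + u (j + 1)) := by
        rw [sum_add_distrib, add_right_comm, ← hX, ← sum_add_distrib]
        refine sum_congr rfl fun j hj => ?_
        simp only [X, show m + 1 - j = m - j + 1 by have := mem_range.mp hj; omega, pow_succ]
        ring

noncomputable def moebiusSlash (a b c d : ℂ) (k : ℤ) (G : ℂ → ℂ) (z : ℂ) : ℂ :=
  (c * z + d) ^ (-k) * G ((a * z + b) / (c * z + d))

section Moebius

variable {a b c d : ℂ}

theorem hasDerivAt_moebius (hdet : a * d - b * c = 1) {z : ℂ} (hz : c * z + d ≠ 0) :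
    HasDerivAt (fun w => (a * w + b) / (c * w + d)) ((c * z + d) ^ (-2 : ℤ)) z := by
  have hnum : HasDerivAt (fun w => a * w + b) a z := by
    simpa using ((hasDerivAt_id z).const_mul a).add_const b
  have hden : HasDerivAt (fun w => c * w + d) c z := by
    simpa using ((hasDerivAt_id z).const_mul c).add_const d
  refine (hnum.div hden hz).congr_deriv ?_
  rw [zpow_neg, zpow_two]
  field_simp
  linear_combination hdet

theorem hasDerivAt_moebiusSlash (hdet : a * d - b * c = 1) (k : ℤ) {G G' : ℂ → ℂ} {z : ℂ}
    (hz : c * z + d ≠ 0)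
    (hG : HasDerivAt G (G' ((a * z + b) / (c * z + d))) ((a * z + b) / (c * z + d))) :
    HasDerivAt (moebiusSlash a b c d k G)
      (-k * c * moebiusSlash a b c d (k + 1) G z + moebiusSlash a b c d (k + 2) G' z) z := by
  have hden : HasDerivAt (fun w => c * w + d) c z := by
    simpa using ((hasDerivAt_id z).const_mul c).add_const d
  have hpow := (hasDerivAt_zpow (-k) _ (Or.inl hz)).comp z hden
  refine (hpow.mul (hG.comp z (hasDerivAt_moebius hdet hz))).congr_deriv ?_
  simp only [moebiusSlash, Function.comp_def]
  rw [show -(k + 1) = -k - 1 by ring, show -(k + 2) = -k + -2 by ring, zpow_add₀ hz]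
  push_cast
  ring

theorem isOpen_moebius_preimage {U : Set ℂ} (hU : IsOpen U) :
    IsOpen {z | c * z + d ≠ 0 ∧ (a * z + b) / (c * z + d) ∈ U} := by
  have hden : IsOpen {z : ℂ | c * z + d ≠ 0} :=
    isOpen_compl_singleton.preimage (by fun_prop)
  exact ContinuousOn.isOpen_inter_preimage (by fun_prop (disch := exact fun z hz => hz)) hden hU

theorem iteratedDeriv_moebiusSlash (hdet : a * d - b * c = 1) (k : ℤ) {G : ℂ → ℂ} {U : Set ℂ}
    {n : WithTop ℕ∞} (hU : IsOpen U) (hG : ContDiffOn ℂ n G U) {m : ℕ} (hm : (m : WithTop ℕ∞) ≤ n) :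
    Set.EqOn (iteratedDeriv m (moebiusSlash a b c d k G))
      (fun z => ∑ j ∈ range (m + 1),
        slashCoeff k m j * (-c) ^ (m - j) * moebiusSlash a b c d (k + m + j) (iteratedDeriv j G) z)
      {z | c * z + d ≠ 0 ∧ (a * z + b) / (c * z + d) ∈ U} := by
  induction m with
  | zero => intro z _; simp [slashCoeff]
  | succ m ih =>
    intro z hz
    have hmn : (m : WithTop ℕ∞) < n := lt_of_lt_of_le (by norm_cast; omega) hm
    rw [iteratedDeriv_succ, (ih hmn.le).deriv (isOpen_moebius_preimage hU) hz]
    have hterm : ∀ j ∈ range (m + 1), HasDerivAt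
        (fun w => slashCoeff k m j * (-c) ^ (m - j) *
          moebiusSlash a b c d (k + m + j) (iteratedDeriv j G) w)
        (slashCoeff k m j * (-c) ^ (m - j) *
          (-(k + m + j) * c * moebiusSlash a b c d (k + (m + 1 : ℕ) + j) (iteratedDeriv j G) z
            + moebiusSlash a b c d (k + (m + 1 : ℕ) + (j + 1 : ℕ)) (iteratedDeriv (j + 1) G) z))
        z := by
      intro j hj
      have hjn : (j : WithTop ℕ∞) < n :=
        lt_of_le_of_lt (by have := mem_range.mp hj; norm_cast; omega) hmn
      have := (hasDerivAt_moebiusSlash hdet (k + m + j) hz.1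
        (hG.hasDerivAt_iteratedDeriv hU hjn hz.2)).const_mul (slashCoeff k m j * (-c) ^ (m - j))
      refine this.congr_deriv ?_
      rw [show k + (m + 1 : ℕ) + j = k + m + j + 1 by push_cast; ring,
        show k + (m + 1 : ℕ) + (j + 1 : ℕ) = k + m + j + 2 by push_cast; ring]
      push_cast
      ring
    rw [(HasDerivAt.fun_sum hterm).deriv, ← sum_slashCoeff_succ]

end Moebius

/-- The 6th order ODE characterising flat `(2,3,5)`-distributions is invariant under the
weight `-1` action `F̃(x) = (cx+d) F((ax+b)/(cx+d))` of `SL₂(ℂ)`. -/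
theorem ode6_sl2_action (U : Set ℂ) (hU : IsOpen U) (F : ℂ → ℂ) (hF : ContDiffOn ℂ 6 F U)
    (hsol : ∀ x ∈ U, 10 * iteratedDeriv 6 F x * (iteratedDeriv 2 F x) ^ 3
      - 80 * (iteratedDeriv 2 F x) ^ 2 * iteratedDeriv 3 F x * iteratedDeriv 5 F x
      - 51 * (iteratedDeriv 2 F x) ^ 2 * (iteratedDeriv 4 F x) ^ 2
      + 336 * iteratedDeriv 2 F x * (iteratedDeriv 3 F x) ^ 2 * iteratedDeriv 4 F x
      - 224 * (iteratedDeriv 3 F x) ^ 4 = 0)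
    (a b c d : ℂ) (hdet : a * d - b * c = 1)
    (Ftil : ℂ → ℂ)
    (hFtil : ∀ x : ℂ, Ftil x = (c * x + d) * F ((a * x + b) / (c * x + d))) :
    ∀ x : ℂ, c * x + d ≠ 0 → (a * x + b) / (c * x + d) ∈ U →
      10 * iteratedDeriv 6 Ftil x * (iteratedDeriv 2 Ftil x) ^ 3
        - 80 * (iteratedDeriv 2 Ftil x) ^ 2 * iteratedDeriv 3 Ftil x * iteratedDeriv 5 Ftil x
        - 51 * (iteratedDeriv 2 Ftil x) ^ 2 * (iteratedDeriv 4 Ftil x) ^ 2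
        + 336 * iteratedDeriv 2 Ftil x * (iteratedDeriv 3 Ftil x) ^ 2 * iteratedDeriv 4 Ftil x
        - 224 * (iteratedDeriv 3 Ftil x) ^ 4 = 0 := by
  intro x hx hxU
  have hFtil' : Ftil = moebiusSlash a b c d (-1) F :=
    funext fun z => by simp [hFtil, moebiusSlash]
  have hderiv (m : ℕ) (hm : m ≤ 6) := hFtil' ▸
    iteratedDeriv_moebiusSlash hdet (-1) hU hF (m := m) (by exact_mod_cast hm) ⟨hx, hxU⟩
  rw [hderiv 2 (by norm_num), hderiv 3 (by norm_num), hderiv 4 (by norm_num),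
    hderiv 5 (by norm_num), hderiv 6 (by norm_num)]
  simp only [sum_range_succ, sum_range_zero, slashCoeff, moebiusSlash]
  norm_num [ascPochhammer_succ_eval, Nat.choose]
  simp only [← inv_pow]
  linear_combination ((c * x + d)⁻¹) ^ 20 * hsol _ hxU
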